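/- Let k ≥ 1 and let ν_1 > ν_2 > … > ν_{2k−1} be real numbers. Suppose x_1,…,x_{2k−1}, x'_1,…,x'_{2k−1} ∈ ℂ and x_{2k}, x'_{2k} ∈ ℝ are such that the Hermitian matrices H(ν,x) and H(ν,x') have the same characteristic polynomial. Then x_{2k} = x'_{2k} and |x_i| = |x'_i| for every i = 1,…,2k−1. -/

import Mathlib

/-!
`H(ν, x)` is an arrowhead matrix. By the Schur complement of its diagonal block, its
characteristic polynomial is
`(X - x_{2k}) ∏ⱼ (X - νⱼ) - ∑ᵢ |xᵢ|² ∏_{j ≠ i} (X - νⱼ)`.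
The trace, read off from this polynomial, recovers `x_{2k}`; evaluating at `νᵢ` kills every term
but the `i`-th, and since the `νⱼ` are distinct this recovers `|xᵢ|²`.
-/

open Matrix Polynomial

/-- The `2k × 2k` complex Hermitian matrix `H(ν, x)` with diagonal
`(ν₁, …, ν_{2k-1}, xlast)`, whose `(i, 2k)` entry is the conjugate of `x i` and whose
`(2k, i)` entry is `x i` for `1 ≤ i ≤ 2k-1`, all other entries `0`. -/
def Hmat (k : ℕ) (ν : Fin (2*k-1) → ℝ) (x : Fin (2*k-1) → ℂ) (xlast : ℝ) :
    Matrix (Fin (2*k)) (Fin (2*k)) ℂ :=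
  Matrix.of fun i j =>
    if hi : i.val < 2*k-1 then
      if hj : j.val < 2*k-1 then (if i = j then (ν ⟨i.val, hi⟩ : ℂ) else 0)
      else (starRingEnd ℂ) (x ⟨i.val, hi⟩)
    else if hj : j.val < 2*k-1 then x ⟨j.val, hj⟩ else (xlast : ℂ)

theorem Fin.strictAnti_of_val_succ_lt {α : Type*} [Preorder α] {n : ℕ} {f : Fin n → α}
    (hf : ∀ i (h : i + 1 < n), f ⟨i + 1, h⟩ < f ⟨i, by omega⟩) : StrictAnti f := by
  cases n with
  | zero => exact fun i => i.elim0
  | succ n => exact Fin.strictAnti_iff_succ_lt.2 fun i => hf i (by omega)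

namespace Matrix

variable {ι R K : Type*} [DecidableEq ι]

def arrowhead [Zero R] (d b c : ι → R) (a : R) : Matrix (ι ⊕ Fin 1) (ι ⊕ Fin 1) R :=
  fromBlocks (diagonal d) (replicateCol (Fin 1) b) (replicateRow (Fin 1) c) (of fun _ _ => a)

variable [Fintype ι]

theorem det_arrowhead_eq_mul_sub_sum_div [Field K] {d : ι → K} (hd : ∀ i, d i ≠ 0)
    (b c : ι → K) (a : K) :
    (arrowhead d b c a).det = (∏ i, d i) * (a - ∑ i, c i * b i / d i) := by
  let _ : Invertible d := ⟨fun i => (d i)⁻¹, funext fun i => inv_mul_cancel₀ (hd i),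
    funext fun i => mul_inv_cancel₀ (hd i)⟩
  let _ := diagonalInvertible d
  rw [arrowhead, det_fromBlocks₁₁, invOf_diagonal_eq, det_diagonal, det_unique]
  simp only [sub_apply, of_apply, mul_apply, diagonal_apply, replicateRow_apply,
    replicateCol_apply, mul_ite, mul_zero, Finset.sum_ite_eq', Finset.mem_univ, if_true,
    div_eq_mul_inv]
  exact congrArg _ (congrArg _ (Finset.sum_congr rfl fun j _ => mul_right_comm _ _ _))

theorem det_arrowhead [CommRing R] [IsDomain R] {d : ι → R} (hd : ∀ i, d i ≠ 0)
    (b c : ι → R) (a : R) :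
    (arrowhead d b c a).det =
      a * ∏ i, d i - ∑ i, c i * b i * ∏ j ∈ Finset.univ.erase i, d j := by
  apply IsFractionRing.injective R (FractionRing R)
  set f := algebraMap R (FractionRing R)
  have hmap : (arrowhead d b c a).map f = arrowhead (f ∘ d) (f ∘ b) (f ∘ c) (f a) := by
    ext (i | i) (j | j) <;> simp [arrowhead, diagonal_apply, apply_ite f]
  rw [RingHom.map_det, RingHom.mapMatrix_apply, hmap,
    det_arrowhead_eq_mul_sub_sum_div (fun i => by simpa [f] using hd i)]
  simp only [map_sub, map_mul, map_sum, map_prod, Function.comp_apply, mul_sub, Finset.mul_sum]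
  congr 1
  · ring
  refine Finset.sum_congr rfl fun i _ => ?_
  rw [← Finset.mul_prod_erase _ _ (Finset.mem_univ i)]
  field_simp [(by simpa [f] using hd i : f (d i) ≠ 0)]

theorem charmatrix_arrowhead [CommRing R] (d b c : ι → R) (a : R) :
    charmatrix (arrowhead d b c a) =
      arrowhead (fun i => X - C (d i)) (fun i => -C (b i)) (fun i => -C (c i)) (X - C a) := by
  ext (i | i) (j | j) : 2
  · by_cases h : i = j <;> simp [arrowhead, h]
  · simp [arrowhead]
  · simp [arrowhead]
  · obtain rfl := Subsingleton.elim i j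
    simp [arrowhead]

theorem charpoly_arrowhead [CommRing R] [IsDomain R] (d b c : ι → R) (a : R) :
    (arrowhead d b c a).charpoly = (X - C a) * ∏ i, (X - C (d i)) -
      ∑ i, C (c i * b i) * ∏ j ∈ Finset.univ.erase i, (X - C (d j)) := by
  rw [charpoly, charmatrix_arrowhead, det_arrowhead fun i => X_sub_C_ne_zero (d i)]
  simp only [neg_mul_neg, C_mul]

theorem eval_charpoly_arrowhead [CommRing R] [IsDomain R] (d b c : ι → R) (a : R) (i : ι) :
    (arrowhead d b c a).charpoly.eval (d i) =
      -(c i * b i) * ∏ j ∈ Finset.univ.erase i, (d i - d j) := by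
  have hvanish : ∀ s : Finset ι, i ∈ s → (∏ l ∈ s, (X - C (d l))).eval (d i) = 0 :=
    fun s hi => by rw [eval_prod]; exact Finset.prod_eq_zero hi (by simp)
  rw [charpoly_arrowhead, eval_sub, eval_mul, hvanish _ (Finset.mem_univ i), mul_zero, zero_sub,
    eval_finsetSum, Finset.sum_eq_single i (fun j _ hj => by
      rw [eval_mul, hvanish _ (Finset.mem_erase.2 ⟨hj.symm, Finset.mem_univ i⟩), mul_zero])
      (by simp)]
  simp [eval_prod]

theorem trace_arrowhead [AddCommMonoid R] (d b c : ι → R) (a : R) :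
    (arrowhead d b c a).trace = ∑ i, d i + a := by
  simp [arrowhead, trace, Fintype.sum_sum_type]

theorem corner_eq_and_mul_eq_of_charpoly_arrowhead_eq [CommRing R] [IsDomain R] {d : ι → R}
    (hd : Function.Injective d) {b c b' c' : ι → R} {a a' : R}
    (h : (arrowhead d b c a).charpoly = (arrowhead d b' c' a').charpoly) :
    a = a' ∧ ∀ i, c i * b i = c' i * b' i := by
  refine ⟨?_, fun i => ?_⟩
  · have htrace := congrArg (fun p => -p.coeff (Fintype.card (ι ⊕ Fin 1) - 1)) h
    simp only [← trace_eq_neg_charpoly_coeff, trace_arrowhead] at htrace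
    exact add_left_cancel htrace
  · have heval := congrArg (eval (d i)) h
    simp only [eval_charpoly_arrowhead] at heval
    have hprod : ∏ j ∈ Finset.univ.erase i, (d i - d j) ≠ 0 :=
      Finset.prod_ne_zero_iff.2 fun j hj =>
        sub_ne_zero.2 (hd.ne (Finset.ne_of_mem_erase hj).symm)
    exact neg_injective (mul_right_cancel₀ hprod heval)

end Matrix

theorem charpoly_Hmat {k : ℕ} (hk : 1 ≤ k) (ν : Fin (2*k-1) → ℝ) (x : Fin (2*k-1) → ℂ)
    (xlast : ℝ) : (Hmat k ν x xlast).charpoly =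
      (arrowhead (fun i => (ν i : ℂ)) (fun i => starRingEnd ℂ (x i)) x xlast).charpoly := by
  let e : Fin (2*k-1) ⊕ Fin 1 ≃ Fin (2*k) := finSumFinEquiv.trans (finCongr (by omega))
  have hblocks : (Hmat k ν x xlast).submatrix e e =
      arrowhead (fun i => (ν i : ℂ)) (fun i => starRingEnd ℂ (x i)) x xlast := by
    ext (i | i) (j | j)
    · by_cases h : i = j <;> simp [e, Hmat, arrowhead, h]
    all_goals simp [e, Hmat, arrowhead]
  have h := charpoly_reindex e.symm (Hmat k ν x xlast)
  rw [reindex_apply, Equiv.symm_symm, hblocks] at h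
  exact h.symm

/-- For strictly decreasing `ν`, the data `(|x₁|, …, |x_{2k-1}|, x_{2k})` is
determined by the characteristic polynomial of `H(ν, x)`. -/
theorem statement13 (k : ℕ) (hk : 1 ≤ k) (ν : Fin (2*k-1) → ℝ)
    (hstrict : ∀ i : ℕ, ∀ h : i + 1 < 2*k-1, ν ⟨i, by omega⟩ > ν ⟨i + 1, h⟩)
    (x x' : Fin (2*k-1) → ℂ) (xlast xlast' : ℝ)
    (hchar : (Hmat k ν x xlast).charpoly = (Hmat k ν x' xlast').charpoly) :
    xlast = xlast' ∧ ∀ i : Fin (2*k-1), ‖x i‖ = ‖x' i‖ := by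
  have hν : Function.Injective fun i => (ν i : ℂ) :=
    Complex.ofReal_injective.comp (Fin.strictAnti_of_val_succ_lt hstrict).injective
  rw [charpoly_Hmat hk, charpoly_Hmat hk] at hchar
  obtain ⟨hlast, hx⟩ := corner_eq_and_mul_eq_of_charpoly_arrowhead_eq hν hchar
  refine ⟨Complex.ofReal_injective hlast, fun i => ?_⟩
  have hsq : ‖x i‖ ^ 2 = ‖x' i‖ ^ 2 := by
    exact_mod_cast (Complex.mul_conj' (x i)).symm.trans ((hx i).trans (Complex.mul_conj' (x' i)))
  exact (sq_eq_sq₀ (norm_nonneg _) (norm_nonneg _)).1 hsq
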